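/- For every integer n ≥ 2, all i, j ∈ {1,…,n−1}, and all x, y ∈ B_n^{(i,j)} with x < y in the Bruhat order, there exists a bigrassmannian permutation w ∈ B_n \ B_n^{(i,j)} such that x < w < y in the Bruhat order. -/

import Mathlib

/-!
Every bigrassmannian permutation of `Fin n` is a block swap `blockSwap n a l m`, whose one-line
notation is `0 … a-1 | a+m … a+m+l-1 | a … a+m-1 | a+l+m … n-1`; its left descent is `a + m`
and its right descent is `a + l`. Indeed `z` is increasing on both sides of its right descent
and `z⁻¹` on both sides of its left descent, which pins down every value of `z`.

So `x = blockSwap n a l m` and `y = blockSwap n a' l' m'` with `a + m = a' + m'` and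
`a + l = a' + l'`; as these block swaps grow in Bruhat order when `a` decreases, `x < y` forces
`a' < a`. Then `w = blockSwap n a (l + 1) m`, whose right
descent is `j + 1`, lies strictly between them. Both `x ≤ w` and `w ≤ y` are chains of the
moves `(a, l, m) ↦ (a, l + 1, m)` and `(a + 1, l, m) ↦ (a, l, m + 1)` and of the mirror image
`(a, l, m) ↦ (a, l, m + 1)` of the first under inversion; each move carries a single entry past a
run of entries that are all smaller, resp. all larger, so it is a chain of length-increasing
adjacent transpositions.
-/

namespace Paper

/-- The simple transposition `s_i = (i, i+1)` (1-based) in `S_n`, realized as a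
permutation of `Fin n`. For `i` outside `{1, …, n-1}` we set `s i = 1`. -/
def s (n i : ℕ) : Equiv.Perm (Fin n) :=
  if h : 1 ≤ i ∧ i < n then Equiv.swap ⟨i - 1, by omega⟩ ⟨i, by omega⟩ else 1

/-- The length of a permutation: its number of inversions. -/
def len {n : ℕ} (w : Equiv.Perm (Fin n)) : ℕ :=
  (Finset.univ.filter (fun p : Fin n × Fin n => p.1 < p.2 ∧ w p.2 < w p.1)).card

/-- `i` is a left descent of `w` if `1 ≤ i ≤ n-1` and `ℓ(s_i w) < ℓ(w)`. -/
def IsLeftDescent {n : ℕ} (w : Equiv.Perm (Fin n)) (i : ℕ) : Prop :=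
  1 ≤ i ∧ i ≤ n - 1 ∧ len (s n i * w) < len w

/-- `i` is a right descent of `w` if `1 ≤ i ≤ n-1` and `ℓ(w s_i) < ℓ(w)`. -/
def IsRightDescent {n : ℕ} (w : Equiv.Perm (Fin n)) (i : ℕ) : Prop :=
  1 ≤ i ∧ i ≤ n - 1 ∧ len (w * s n i) < len w

/-- A permutation is bigrassmannian if it has exactly one left descent and
exactly one right descent. -/
def Bigrassmannian {n : ℕ} (w : Equiv.Perm (Fin n)) : Prop :=
  (∃! i, IsLeftDescent w i) ∧ (∃! j, IsRightDescent w j)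

/-- One step of the Bruhat order: `w ⋖ t * w` for a transposition `t`
with `ℓ(w) < ℓ(t w)`. -/
def BruhatStep {n : ℕ} (w w' : Equiv.Perm (Fin n)) : Prop :=
  ∃ a b : Fin n, a ≠ b ∧ w' = Equiv.swap a b * w ∧ len w < len w'

/-- The Bruhat order on `S_n`: the partial order generated by `w < tw` whenever
`t` is a transposition and `ℓ(w) < ℓ(tw)`. -/
def BruhatLE {n : ℕ} : Equiv.Perm (Fin n) → Equiv.Perm (Fin n) → Prop :=
  Relation.ReflTransGen BruhatStep

/-- Strict Bruhat order. -/
def BruhatLT {n : ℕ} (x y : Equiv.Perm (Fin n)) : Prop :=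
  BruhatLE x y ∧ x ≠ y

/-- The product `s_a s_{a+1} ⋯ s_b` of consecutive simple transpositions. -/
def ascRun (n a b : ℕ) : Equiv.Perm (Fin n) :=
  ((List.range (b + 1 - a)).map (fun t => s n (a + t))).prod

/-- For `i ≤ j`: `b(i,j,k) = (s_i ⋯ s_{j+k})(s_{i-1} ⋯ s_{j+k-1}) ⋯ (s_{i-k} ⋯ s_j)`. -/
def bAux (n i j k : ℕ) : Equiv.Perm (Fin n) :=
  ((List.range (k + 1)).map (fun m => ascRun n (i - m) (j + k - m))).prod

/-- The bigrassmannian permutation `b(i,j,k)`; for `j < i` it is `b(j,i,k)⁻¹`. -/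
def b (n i j k : ℕ) : Equiv.Perm (Fin n) :=
  if i ≤ j then bAux n i j k else (bAux n j i k)⁻¹

/-- The value `w(i)` of a permutation `w ∈ S_n` at `i ∈ {1, …, n}`, 1-based. -/
def act {n : ℕ} (w : Equiv.Perm (Fin n)) (i : ℕ) : ℕ :=
  if h : 1 ≤ i ∧ i ≤ n then ((w ⟨i - 1, by omega⟩ : Fin n) : ℕ) + 1 else i

/-- The essential set of a permutation `w ∈ S_n`. -/
def Ess {n : ℕ} (w : Equiv.Perm (Fin n)) : Set (ℕ × ℕ) :=
  {p | 1 ≤ p.1 ∧ p.1 ≤ n - 1 ∧ 1 ≤ p.2 ∧ p.2 ≤ n - 1 ∧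
    p.1 < act w⁻¹ p.2 ∧ p.2 < act w p.1 ∧
    act w (p.1 + 1) ≤ p.2 ∧ act w⁻¹ (p.2 + 1) ≤ p.1}

/-- The rank function `r_w(i,j) = |{k ≤ i : w(k) ≤ j}|` (1-based). -/
def rnk {n : ℕ} (w : Equiv.Perm (Fin n)) (i j : ℕ) : ℕ :=
  ((Finset.Icc 1 i).filter (fun k => act w k ≤ j)).card

/-- The co-rank function `t_w(i,j) = min{i,j} - r_w(i,j)`. -/
def cork {n : ℕ} (w : Equiv.Perm (Fin n)) (i j : ℕ) : ℕ :=
  min i j - rnk w i j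

/-- The set of bigrassmannian permutations `y ≤ w` in Bruhat order. -/
def BSet {n : ℕ} (w : Equiv.Perm (Fin n)) : Set (Equiv.Perm (Fin n)) :=
  {y | Bigrassmannian y ∧ BruhatLE y w}

/-- The set of Bruhat-maximal elements of `BSet w`. -/
def BM {n : ℕ} (w : Equiv.Perm (Fin n)) : Set (Equiv.Perm (Fin n)) :=
  {y ∈ BSet w | ∀ z ∈ BSet w, BruhatLE y z → z = y}

open Equiv

section

variable {n : ℕ}

/-- `w` on 0-based positions, read in `ℕ` and extended by the identity, so that position
arithmetic can be left to `omega`. -/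
def natApply (w : Perm (Fin n)) (p : ℕ) : ℕ :=
  if h : p < n then w ⟨p, h⟩ else p

lemma natApply_lt (w : Perm (Fin n)) {p : ℕ} (hp : p < n) : natApply w p < n := by
  simp [natApply, hp]

lemma natApply_fin (w : Perm (Fin n)) (p : Fin n) : natApply w p = w p := by
  simp [natApply]

lemma natApply_inv_natApply (w : Perm (Fin n)) {p : ℕ} (hp : p < n) :
    natApply w⁻¹ (natApply w p) = p := by
  simp [natApply, hp]

lemma natApply_natApply_inv (w : Perm (Fin n)) {p : ℕ} (hp : p < n) :
    natApply w (natApply w⁻¹ p) = p := by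
  simpa using natApply_inv_natApply w⁻¹ hp

lemma eq_of_natApply_eq (w : Perm (Fin n)) {p q : ℕ} (hp : p < n) (hq : q < n)
    (h : natApply w p = natApply w q) : p = q := by
  rw [← natApply_inv_natApply w hp, h, natApply_inv_natApply w hq]

lemma perm_ext_natApply {v w : Perm (Fin n)} (h : ∀ p < n, natApply v p = natApply w p) :
    v = w :=
  Equiv.ext fun p => Fin.ext <| by simpa [natApply_fin] using h p p.isLt

lemma natApply_mul_swap (u : Perm (Fin n)) (a b : Fin n) (p : ℕ) :
    natApply (u * swap a b) p =
      natApply u (if p = a then b else if p = b then a else p) := by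
  by_cases hp : p < n
  · lift p to Fin n using hp
    simp only [natApply_fin, Perm.mul_apply, swap_apply_def, ← Fin.ext_iff]
    split_ifs <;> simp [natApply_fin]
  · have : p ≠ a ∧ p ≠ b := ⟨by omega, by omega⟩
    simp [natApply, hp, this]

lemma swap_lt_swap_of_lt {a b p q : Fin n} (hab : (a : ℕ) + 1 = b) (hpq : p < q)
    (hne : (p, q) ≠ (a, b)) : swap a b p < swap a b q := by
  simp only [swap_apply_def, Fin.lt_def, ne_eq, Prod.mk.injEq, Fin.ext_iff] at *
  split_ifs <;> omega

lemma len_mul_swap_of_lt (u : Perm (Fin n)) {a b : Fin n} (hab : (a : ℕ) + 1 = b)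
    (hu : u a < u b) : len (u * swap a b) = len u + 1 := by
  have hlt : a < b := Fin.lt_def.mpr (by omega)
  unfold len
  rw [← Finset.card_erase_add_one (a := (a, b)) (by rw [Finset.mem_filter]; simpa [hlt] using hu)]
  congr 1
  apply Finset.card_bij' (fun p _ => (swap a b p.1, swap a b p.2))
    (fun p _ => (swap a b p.1, swap a b p.2))
  · rintro ⟨p, q⟩ hpq
    simp only [Finset.mem_erase, Finset.mem_filter, Finset.mem_univ, true_and] at hpq ⊢
    exact ⟨swap_lt_swap_of_lt hab hpq.2.1 hpq.1, by simpa using hpq.2.2⟩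
  · rintro ⟨p, q⟩ hpq
    simp only [Finset.mem_erase, Finset.mem_filter, Finset.mem_univ, true_and] at hpq ⊢
    have hne : (p, q) ≠ (a, b) := by
      rintro ⟨⟩; exact lt_asymm hu hpq.2
    refine ⟨?_, swap_lt_swap_of_lt hab hpq.1 hne, by simpa using hpq.2⟩
    intro h
    simp only [Prod.mk.injEq, swap_apply_eq_iff, swap_apply_left, swap_apply_right] at h
    exact lt_asymm hlt (h.1 ▸ h.2 ▸ hpq.1)
  · simp
  · simp

lemma len_inv (u : Perm (Fin n)) : len u⁻¹ = len u := by
  apply Finset.card_bij' (fun p _ => (u⁻¹ p.2, u⁻¹ p.1)) (fun p _ => (u p.2, u p.1))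
  · rintro ⟨p, q⟩ h
    simp only [Finset.mem_filter, Finset.mem_univ, true_and] at h ⊢
    exact ⟨h.2, by simpa using h.1⟩
  · rintro ⟨p, q⟩ h
    simp only [Finset.mem_filter, Finset.mem_univ, true_and] at h ⊢
    exact ⟨h.2, by simpa using h.1⟩
  · simp
  · simp

lemma s_eq_swap {m : ℕ} (h1 : 1 ≤ m) (h2 : m < n) :
    s n m = swap ⟨m - 1, by omega⟩ ⟨m, h2⟩ :=
  dif_pos ⟨h1, h2⟩

lemma s_inv (m : ℕ) : (s n m)⁻¹ = s n m := by
  unfold s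
  split_ifs
  · exact swap_inv _ _
  · rfl

/-- The 1-based descent index `m` compares the 0-based positions `m - 1` and `m`. -/
lemma isRightDescent_iff (u : Perm (Fin n)) {m : ℕ} (h1 : 1 ≤ m) (h2 : m < n) :
    IsRightDescent u m ↔ natApply u m < natApply u (m - 1) := by
  set a : Fin n := ⟨m - 1, by omega⟩
  set b : Fin n := ⟨m, h2⟩
  have hab : (a : ℕ) + 1 = b := by simp only [a, b]; omega
  have hne : u a ≠ u b := u.injective.ne (Fin.ne_of_val_ne (by simp only [a, b]; omega))
  rw [IsRightDescent, show s n m = swap a b from s_eq_swap h1 h2,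
    show natApply u m = u b from natApply_fin u b,
    show natApply u (m - 1) = u a from natApply_fin u a]
  rcases hne.lt_or_gt with h | h
  · rw [len_mul_swap_of_lt u hab h]
    simp only [Fin.lt_def] at h
    omega
  · have hlen := len_mul_swap_of_lt (u * swap a b) hab (by simpa using h)
    rw [mul_swap_mul_self] at hlen
    simp only [Fin.lt_def] at h
    omega

lemma isLeftDescent_iff_isRightDescent_inv (u : Perm (Fin n)) (m : ℕ) :
    IsLeftDescent u m ↔ IsRightDescent u⁻¹ m := by
  rw [IsLeftDescent, IsRightDescent, ← len_inv (s n m * u), mul_inv_rev, s_inv, len_inv u]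

lemma bruhatStep_mul_swap (u : Perm (Fin n)) {a b : Fin n} (hab : (a : ℕ) + 1 = b)
    (hu : u a < u b) : BruhatStep u (u * swap a b) :=
  ⟨u a, u b, hu.ne, mul_swap_eq_swap_mul u a b, by rw [len_mul_swap_of_lt u hab hu]; omega⟩

lemma BruhatStep.inv {u v : Perm (Fin n)} (h : BruhatStep u v) : BruhatStep u⁻¹ v⁻¹ := by
  obtain ⟨a, b, hab, rfl, hlen⟩ := h
  refine ⟨u⁻¹ a, u⁻¹ b, u⁻¹.injective.ne hab, ?_, by rwa [len_inv, len_inv]⟩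
  rw [mul_inv_rev, swap_inv, mul_swap_eq_swap_mul]

lemma BruhatLE.inv {u v : Perm (Fin n)} (h : BruhatLE u v) : BruhatLE u⁻¹ v⁻¹ := by
  induction h with
  | refl => exact .refl
  | tail _ hstep ih => exact ih.tail hstep.inv

lemma BruhatLE.len_le {u v : Perm (Fin n)} (h : BruhatLE u v) : len u ≤ len v := by
  induction h with
  | refl => exact le_rfl
  | tail _ hstep ih => obtain ⟨_, _, _, _, hlen⟩ := hstep; omega

lemma BruhatLT.not_le {u v : Perm (Fin n)} (h : BruhatLT u v) : ¬ BruhatLE v u := by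
  intro hvu
  rcases Relation.ReflTransGen.cases_head h.1 with rfl | ⟨w, ⟨_, _, _, _, hlen⟩, hwv⟩
  · exact h.2 rfl
  · have := BruhatLE.len_le hwv; have := hvu.len_le; omega

lemma natApply_mul_swap_succ (u : Perm (Fin n)) {p : ℕ} (hp : p + 1 < n) (m : ℕ) :
    natApply (u * swap ⟨p, by omega⟩ ⟨p + 1, hp⟩) m =
      natApply u (if m = p then p + 1 else if m = p + 1 then p else m) :=
  natApply_mul_swap u _ _ m

lemma bruhatStep_mul_swap_succ (u : Perm (Fin n)) {p : ℕ} (hp : p + 1 < n)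
    (hu : natApply u p < natApply u (p + 1)) :
    BruhatStep u (u * swap ⟨p, by omega⟩ ⟨p + 1, hp⟩) :=
  bruhatStep_mul_swap u rfl <| by
    rwa [Fin.lt_def, ← natApply_fin, ← natApply_fin]

lemma bruhatLE_of_rotate_left (d : ℕ) : ∀ {u v : Perm (Fin n)} {p : ℕ}, p + d < n →
    (∀ m, p ≤ m → m < p + d → natApply u m < natApply u (p + d)) →
    (∀ m < n, natApply v m =
      natApply u (if m = p then p + d else if p < m ∧ m ≤ p + d then m - 1 else m)) →
    BruhatLE u v := by
  induction d with
  | zero =>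
    intro u v p _ _ hv
    rw [perm_ext_natApply fun m hm => (hv m hm).trans (by congr 1; split_ifs <;> omega)]
    exact .refl
  | succ d ih =>
    intro u v p hpd hlt hv
    have hp : p + d + 1 < n := by omega
    refine .head (bruhatStep_mul_swap_succ u hp (hlt _ (by omega) (by omega)))
      (ih (p := p) (by omega) ?_ ?_)
    · intro m hm1 hm2
      rw [natApply_mul_swap_succ, natApply_mul_swap_succ]
      convert hlt m hm1 (by omega) using 2 <;> split_ifs <;> omega
    · intro m hm
      rw [hv m hm, natApply_mul_swap_succ]
      congr 1
      split_ifs <;> omega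

lemma bruhatLE_of_rotate_right (d : ℕ) : ∀ {u v : Perm (Fin n)} {p : ℕ}, p + d < n →
    (∀ m, p < m → m ≤ p + d → natApply u p < natApply u m) →
    (∀ m < n, natApply v m =
      natApply u (if m = p + d then p else if p ≤ m ∧ m < p + d then m + 1 else m)) →
    BruhatLE u v := by
  induction d with
  | zero =>
    intro u v p _ _ hv
    rw [perm_ext_natApply fun m hm => (hv m hm).trans (by congr 1; split_ifs <;> omega)]
    exact .refl
  | succ d ih =>
    intro u v p hpd hlt hv
    have hp : p + 1 < n := by omega
    refine .head (bruhatStep_mul_swap_succ u hp (hlt _ (by omega) (by omega)))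
      (ih (p := p + 1) (by omega) ?_ ?_)
    · intro m hm1 hm2
      rw [natApply_mul_swap_succ, natApply_mul_swap_succ]
      convert hlt m (by omega) (by omega) using 2 <;> split_ifs <;> omega
    · intro m hm
      rw [hv m hm, natApply_mul_swap_succ]
      congr 1
      split_ifs <;> omega

end

def blockSwapFun (a l m p : ℕ) : ℕ :=
  if p < a then p else if p < a + l then p + m else if p < a + l + m then p - l else p

def blockSwap (n a l m : ℕ) (h : a + l + m ≤ n) : Perm (Fin n) where
  toFun p := ⟨blockSwapFun a l m p, by
    have := p.isLt; unfold blockSwapFun; split_ifs <;> omega⟩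
  invFun p := ⟨blockSwapFun a m l p, by
    have := p.isLt; unfold blockSwapFun; split_ifs <;> omega⟩
  left_inv p := Fin.ext <| show blockSwapFun a m l (blockSwapFun a l m p) = p by
    unfold blockSwapFun; split_ifs <;> omega
  right_inv p := Fin.ext <| show blockSwapFun a l m (blockSwapFun a m l p) = p by
    unfold blockSwapFun; split_ifs <;> omega

section BlockSwap

variable {n a l m : ℕ}

lemma natApply_blockSwap (h : a + l + m ≤ n) (p : ℕ) :
    natApply (blockSwap n a l m h) p = blockSwapFun a l m p := by
  by_cases hp : p < n
  · simp [natApply, hp, blockSwap]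
  · simp only [natApply, hp, dif_neg, not_false_eq_true, blockSwapFun]
    split_ifs <;> omega

lemma blockSwap_inv (h : a + l + m ≤ n) :
    (blockSwap n a l m h)⁻¹ = blockSwap n a m l (by omega) :=
  rfl

lemma isRightDescent_blockSwap_iff (h : a + l + m ≤ n) (hl : 1 ≤ l) (hm : 1 ≤ m) {j : ℕ} :
    IsRightDescent (blockSwap n a l m h) j ↔ j = a + l := by
  constructor
  · intro hj
    have ⟨hj1, hjn, _⟩ := hj
    rw [isRightDescent_iff _ hj1 (by omega), natApply_blockSwap h,
      natApply_blockSwap h] at hj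
    unfold blockSwapFun at hj
    split_ifs at hj <;> omega
  · rintro rfl
    rw [isRightDescent_iff _ (by omega) (by omega), natApply_blockSwap h,
      natApply_blockSwap h]
    unfold blockSwapFun
    split_ifs <;> omega

lemma isLeftDescent_blockSwap_iff (h : a + l + m ≤ n) (hl : 1 ≤ l) (hm : 1 ≤ m) {i : ℕ} :
    IsLeftDescent (blockSwap n a l m h) i ↔ i = a + m := by
  rw [isLeftDescent_iff_isRightDescent_inv, blockSwap_inv, isRightDescent_blockSwap_iff _ hm hl]

lemma bigrassmannian_blockSwap (h : a + l + m ≤ n) (hl : 1 ≤ l) (hm : 1 ≤ m) :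
    Bigrassmannian (blockSwap n a l m h) :=
  ⟨⟨a + m, (isLeftDescent_blockSwap_iff h hl hm).2 rfl,
      fun _ => (isLeftDescent_blockSwap_iff h hl hm).1⟩,
    ⟨a + l, (isRightDescent_blockSwap_iff h hl hm).2 rfl,
      fun _ => (isRightDescent_blockSwap_iff h hl hm).1⟩⟩

lemma blockSwap_le_blockSwap_succ_left (h : a + (l + 1) + m ≤ n) :
    BruhatLE (blockSwap n a l m (by omega)) (blockSwap n a (l + 1) m h) := by
  refine bruhatLE_of_rotate_left m (p := a + l) (by omega) (fun q hq1 hq2 => ?_)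
    (fun q hq => ?_) <;> simp only [natApply_blockSwap, blockSwapFun] <;> split_ifs <;> omega

lemma blockSwap_succ_le_blockSwap (h : a + l + (m + 1) ≤ n) :
    BruhatLE (blockSwap n (a + 1) l m (by omega)) (blockSwap n a l (m + 1) h) := by
  refine bruhatLE_of_rotate_right l (p := a) (by omega) (fun q hq1 hq2 => ?_)
    (fun q hq => ?_) <;> simp only [natApply_blockSwap, blockSwapFun] <;> split_ifs <;> omega

lemma blockSwap_le_blockSwap_of_left_le {l' : ℕ} (hl : l ≤ l') (h : a + l + m ≤ n)
    (h' : a + l' + m ≤ n) : BruhatLE (blockSwap n a l m h) (blockSwap n a l' m h') := by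
  induction l', hl using Nat.le_induction with
  | base => exact .refl
  | succ l' hl ih => exact (ih (by omega)).trans (blockSwap_le_blockSwap_succ_left h')

lemma blockSwap_le_blockSwap_of_right_le {m' : ℕ} (hm : m ≤ m') (h : a + l + m ≤ n)
    (h' : a + l + m' ≤ n) : BruhatLE (blockSwap n a l m h) (blockSwap n a l m' h') := by
  have := (blockSwap_le_blockSwap_of_left_le (n := n) (a := a) (m := l) hm
    (by omega) (by omega)).inv
  rwa [blockSwap_inv, blockSwap_inv] at this

lemma blockSwap_le_blockSwap {a' l' m' : ℕ} (ha : a' ≤ a) (hl : l ≤ l')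
    (hm : a + m ≤ a' + m') (h : a + l + m ≤ n) (h' : a' + l' + m' ≤ n) :
    BruhatLE (blockSwap n a l m h) (blockSwap n a' l' m' h') := by
  induction a generalizing m with
  | zero =>
    obtain rfl : a' = 0 := by omega
    exact (blockSwap_le_blockSwap_of_left_le hl h (by omega)).trans
      (blockSwap_le_blockSwap_of_right_le (by omega) _ h')
  | succ a ih =>
    rcases ha.eq_or_lt with rfl | ha
    · exact (blockSwap_le_blockSwap_of_left_le hl h (by omega)).trans
        (blockSwap_le_blockSwap_of_right_le (by omega) _ h')
    · exact (blockSwap_succ_le_blockSwap (by omega)).trans (ih (by omega) (by omega) _)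

end BlockSwap

def IsGrassmannianAt {n : ℕ} (z : Perm (Fin n)) (J : ℕ) : Prop :=
  ∀ p q, p < q → q < n → (q < J ∨ J ≤ p) → natApply z p < natApply z q

section Grassmannian

variable {n : ℕ} {z : Perm (Fin n)} {I J : ℕ}

lemma Bigrassmannian.inv (hz : Bigrassmannian z) : Bigrassmannian z⁻¹ := by
  simp only [Bigrassmannian, isLeftDescent_iff_isRightDescent_inv, inv_inv] at hz ⊢
  exact hz.symm

lemma IsLeftDescent.inv (hI : IsLeftDescent z I) : IsRightDescent z⁻¹ I :=
  (isLeftDescent_iff_isRightDescent_inv z I).1 hI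

lemma IsRightDescent.inv (hJ : IsRightDescent z J) : IsLeftDescent z⁻¹ J := by
  rwa [isLeftDescent_iff_isRightDescent_inv, inv_inv]

lemma IsRightDescent.lt (hJ : IsRightDescent z J) : J < n := by
  have := hJ.1; have := hJ.2.1; omega

lemma IsRightDescent.natApply_lt (hJ : IsRightDescent z J) :
    natApply z J < natApply z (J - 1) :=
  (isRightDescent_iff z hJ.1 hJ.lt).1 hJ

lemma IsRightDescent.isGrassmannianAt (hJ : IsRightDescent z J) (hz : Bigrassmannian z) :
    IsGrassmannianAt z J := by
  have hstep : ∀ t, t + 1 < n → t + 1 ≠ J → natApply z t < natApply z (t + 1) := by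
    intro t ht hne
    have hasc : ¬ IsRightDescent z (t + 1) := fun h => hne (hz.2.unique h hJ)
    rw [isRightDescent_iff z (by omega) ht, not_lt, Nat.add_sub_cancel] at hasc
    exact hasc.lt_of_ne fun h => by have := eq_of_natApply_eq z (by omega) ht h; omega
  intro p q hpq hq hside
  induction q, hpq using Nat.le_induction with
  | base => exact hstep p hq (by omega)
  | succ q hpq ih => exact (ih (by omega) (by omega)).trans (hstep q hq (by omega))

lemma IsLeftDescent.isGrassmannianAt_inv (hI : IsLeftDescent z I) (hz : Bigrassmannian z) :
    IsGrassmannianAt z⁻¹ I :=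
  hI.inv.isGrassmannianAt hz.inv

namespace IsGrassmannianAt

lemma add_le_natApply_add (hz : IsGrassmannianAt z J) {p d : ℕ} (hd : p + d < n)
    (hside : p + d < J ∨ J ≤ p) : natApply z p + d ≤ natApply z (p + d) := by
  induction d with
  | zero => rfl
  | succ d ih =>
    rw [show p + (d + 1) = p + d + 1 by omega]
    have := hz (p + d) (p + d + 1) (by omega) (by omega) (by omega)
    have := ih (by omega) (by omega)
    omega

lemma le_natApply (hz : IsGrassmannianAt z J) {p : ℕ} (hp : p < J) (hJ : J ≤ n) :
    p ≤ natApply z p := by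
  have := hz.add_le_natApply_add (p := 0) (d := p) (by omega) (by omega)
  simp only [Nat.zero_add] at this
  omega

lemma natApply_le (hz : IsGrassmannianAt z J) {p : ℕ} (hJp : J ≤ p) (hp : p < n) :
    natApply z p ≤ p := by
  have := hz.add_le_natApply_add (p := p) (d := n - 1 - p) (by omega) (.inr hJp)
  have := natApply_lt z (show p + (n - 1 - p) < n by omega)
  omega

lemma lt_and_le_of_inversion (hg : IsGrassmannianAt z⁻¹ I) {p q : ℕ} (hpq : p < q) (hq : q < n)
    (hinv : natApply z q < natApply z p) : natApply z q < I ∧ I ≤ natApply z p := by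
  by_contra hcon
  have := hg _ _ hinv (natApply_lt z (by omega)) (by omega)
  rw [natApply_inv_natApply z hq, natApply_inv_natApply z (by omega)] at this
  omega

lemma natApply_eq_add_sub (hf : IsGrassmannianAt z J) (hg : IsGrassmannianAt z⁻¹ I)
    (hJ : J ≤ n) {c p : ℕ} (hc : natApply z c = I) (hcp : c ≤ p) (hpJ : p < J) :
    natApply z p = p + I - c := by
  induction p, hcp using Nat.le_induction with
  | base => omega
  | succ p hcp ih =>
    have hV := ih (by omega)
    have hlt := hf p (p + 1) (by omega) (by omega) (.inl hpJ)
    have hVn := natApply_lt z (show p + 1 < n by omega)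
    by_contra hne
    have h1 := hg (natApply z p) (natApply z p + 1) (by omega) (by omega) (.inr (by omega))
    have h2 := hg (natApply z p + 1) (natApply z (p + 1)) (by omega) hVn (.inr (by omega))
    rw [natApply_inv_natApply z (by omega)] at h1 h2
    omega

end IsGrassmannianAt

end Grassmannian

section Classification

variable {n : ℕ} {z : Perm (Fin n)} {I J : ℕ}

lemma natApply_isRightDescent_lt (hz : Bigrassmannian z) (hI : IsLeftDescent z I)
    (hJ : IsRightDescent z J) : natApply z J < I :=
  ((hI.isGrassmannianAt_inv hz).lt_and_le_of_inversion (p := J - 1)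
    (by have := hJ.1; omega) hJ.lt hJ.natApply_lt).1

lemma natApply_eq_self_of_lt (hz : Bigrassmannian z) (hI : IsLeftDescent z I)
    (hJ : IsRightDescent z J) {p : ℕ} (hp : p < natApply z J) : natApply z p = p := by
  have hf := hJ.isGrassmannianAt hz
  have haJ := hf.natApply_le le_rfl hJ.lt
  have haI := natApply_isRightDescent_lt hz hI hJ
  have hpn : p < n := by have := hJ.lt; omega
  have hle := hf.le_natApply (p := p) (by omega) hJ.lt.le
  have hq : natApply z (natApply z⁻¹ p) = p := natApply_natApply_inv z hpn
  have hqn := natApply_lt z⁻¹ hpn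
  have hpq : p ≤ natApply z⁻¹ p :=
    (hI.isGrassmannianAt_inv hz).le_natApply (by omega) hI.inv.lt.le
  by_contra hne
  have hpq : p < natApply z⁻¹ p := hpq.lt_of_ne fun h => hne (by rwa [← h] at hq)
  rcases lt_or_ge (natApply z⁻¹ p) J with hqJ | hqJ
  · have := hf p _ hpq hqn (.inl hqJ)
    omega
  · rcases hqJ.eq_or_lt with hqJ | hqJ
    · rw [← hqJ] at hq; omega
    · have := hf J _ hqJ hqn (.inr le_rfl)
      omega

lemma natApply_inv_isLeftDescent_eq (hz : Bigrassmannian z) (hI : IsLeftDescent z I)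
    (hJ : IsRightDescent z J) : natApply z⁻¹ I = natApply z J := by
  have haI := natApply_isRightDescent_lt hz hI hJ
  have haJ := natApply_isRightDescent_lt hz.inv hJ.inv hI.inv
  have hfg : natApply z⁻¹ (natApply z J) = J := natApply_inv_natApply z hJ.lt
  have hgf : natApply z (natApply z⁻¹ I) = I := natApply_natApply_inv z hI.inv.lt
  rcases lt_trichotomy (natApply z⁻¹ I) (natApply z J) with h | h | h
  · have := natApply_eq_self_of_lt hz hI hJ h
    omega
  · exact h
  · have := natApply_eq_self_of_lt hz.inv hJ.inv hI.inv h
    omega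

theorem Bigrassmannian.exists_eq_blockSwap (hz : Bigrassmannian z) :
    ∃ a l m, ∃ h : a + l + m ≤ n, 1 ≤ l ∧ 1 ≤ m ∧ z = blockSwap n a l m h := by
  obtain ⟨I, hI, -⟩ := hz.1
  obtain ⟨J, hJ, -⟩ := hz.2
  have hf := hJ.isGrassmannianAt hz
  have hg := hI.isGrassmannianAt_inv hz
  set a := natApply z J
  have haI : a < I := natApply_isRightDescent_lt hz hI hJ
  have hga : natApply z⁻¹ I = a := natApply_inv_isLeftDescent_eq hz hI hJ
  have haJ : a < J := hga ▸ natApply_isRightDescent_lt hz.inv hJ.inv hI.inv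
  have hmid : ∀ p, a ≤ p → p < J → natApply z p = p + I - a := fun p =>
    hf.natApply_eq_add_sub hg hJ.lt.le (hga ▸ natApply_natApply_inv z hI.inv.lt)
  have hmid' : ∀ p, a ≤ p → p < I → natApply z⁻¹ p = p + J - a := fun p =>
    hg.natApply_eq_add_sub (by simpa using hf) hI.inv.lt.le (natApply_inv_natApply z hJ.lt)
  have hn : J + I - a ≤ n := by
    have := hmid' (I - 1) (by omega) (by omega)
    have := natApply_lt z⁻¹ (show I - 1 < n by have := hI.inv.lt; omega)
    omega
  have hlow : ∀ p, J ≤ p → p < J + I - a → natApply z p = p + a - J := by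
    intro p h1 h2
    have e := natApply_natApply_inv z (show p + a - J < n by omega)
    rwa [hmid' _ (by omega) (by omega), show p + a - J + J - a = p by omega] at e
  refine ⟨a, J - a, I - a, by omega, by omega, by omega, perm_ext_natApply fun p hp => ?_⟩
  rw [natApply_blockSwap]
  unfold blockSwapFun
  split_ifs with h1 h2 h3
  · exact natApply_eq_self_of_lt hz hI hJ h1
  · rw [hmid p (by omega) (by omega)]
    omega
  · rw [hlow p (by omega) (by omega)]
    omega
  · have hlast := hlow (J + I - a - 1) (by omega) (by omega)
    have hinc := hf (J + I - a - 1) p (by omega) hp (.inr (by omega))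
    have hfp := natApply_lt z hp
    have hgf := hg.natApply_le (p := natApply z p) (by omega) hfp
    rw [natApply_inv_natApply z hp] at hgf
    have := hf.natApply_le (p := p) (by omega) hp
    omega

end Classification

theorem stmt3_general (n : ℕ) (i j : ℕ)
    (x y : Equiv.Perm (Fin n))
    (hx : Bigrassmannian x ∧ IsLeftDescent x i ∧ IsRightDescent x j)
    (hy : Bigrassmannian y ∧ IsLeftDescent y i ∧ IsRightDescent y j)
    (hxy : BruhatLT x y) :
    ∃ w : Equiv.Perm (Fin n), Bigrassmannian w ∧
      ¬(IsLeftDescent w i ∧ IsRightDescent w j) ∧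
      BruhatLT x w ∧ BruhatLT w y := by
  obtain ⟨hxb, hxi, hxj⟩ := hx
  obtain ⟨hyb, hyi, hyj⟩ := hy
  obtain ⟨a, l, m, h, hl, hm, rfl⟩ := hxb.exists_eq_blockSwap
  obtain ⟨a', l', m', h', hl', hm', rfl⟩ := hyb.exists_eq_blockSwap
  have hia : i = a + m := (isLeftDescent_blockSwap_iff h hl hm).1 hxi
  have hja : j = a + l := (isRightDescent_blockSwap_iff h hl hm).1 hxj
  have hia' : i = a' + m' := (isLeftDescent_blockSwap_iff h' hl' hm').1 hyi
  have hja' : j = a' + l' := (isRightDescent_blockSwap_iff h' hl' hm').1 hyj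
  have ha : a' < a := by
    by_contra! ha
    exact hxy.not_le (blockSwap_le_blockSwap ha (by omega) (by omega) h' h)
  have hw : a + (l + 1) + m ≤ n := by omega
  have hwj := isRightDescent_blockSwap_iff hw (by omega) hm (j := j)
  refine ⟨blockSwap n a (l + 1) m hw, bigrassmannian_blockSwap hw (by omega) hm,
    fun hwd => ?_, ⟨blockSwap_le_blockSwap le_rfl (by omega) le_rfl h hw, fun e => ?_⟩,
    ⟨blockSwap_le_blockSwap ha.le (by omega) (by omega) hw h', fun e => ?_⟩⟩
  · have := hwj.1 hwd.2; omega
  · have := hwj.1 (e ▸ hxj); omega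
  · have := hwj.1 (e ▸ hyj); omega

theorem stmt3 (n : ℕ) (hn : 2 ≤ n) (i j : ℕ)
    (hi1 : 1 ≤ i) (hi2 : i ≤ n - 1) (hj1 : 1 ≤ j) (hj2 : j ≤ n - 1)
    (x y : Equiv.Perm (Fin n))
    (hx : Bigrassmannian x ∧ IsLeftDescent x i ∧ IsRightDescent x j)
    (hy : Bigrassmannian y ∧ IsLeftDescent y i ∧ IsRightDescent y j)
    (hxy : BruhatLT x y) :
    ∃ w : Equiv.Perm (Fin n), Bigrassmannian w ∧
      ¬(IsLeftDescent w i ∧ IsRightDescent w j) ∧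
      BruhatLT x w ∧ BruhatLT w y :=
  stmt3_general n i j x y hx hy hxy

end Paper
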